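/- Let N be even, σ(0) = # 0^{N-1}, σ(1) = # 1^{N-1}, and let s be an infinite binary word with abelian critical exponent A(s) = θ' > 0. Then the abelian critical exponent of σ(s) equals θ'/N. -/

import Mathlib

open Filter ENNReal

/-- Abelian equivalence of words: each letter occurs equally often. -/
def AbEq {A : Type*} [DecidableEq A] (u v : List A) : Prop :=
  ∀ a : A, u.count a = v.count a

/-- `u` occurs as a (contiguous) factor of the infinite word `x`. -/
def OccursIn {A : Type*} (x : ℕ → A) (u : List A) : Prop :=
  ∃ i, u = (List.range u.length).map fun j => x (i + j)

/-- An abelian power of exponent `e` and period `m` occurs in `x`. -/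
def IsAbPow {A : Type*} [DecidableEq A] (x : ℕ → A) (e m : ℕ) : Prop :=
  0 < e ∧ 0 < m ∧ ∃ u : ℕ → List A,
    (∀ i < e, (u i).length = m) ∧
    (∀ i < e, AbEq (u i) (u 0)) ∧
    OccursIn x (((List.range e).map u).flatten)

/-- The supremum of exponents of abelian powers of period `m` occurring in `x`. -/
noncomputable def AbExpSup {A : Type*} [DecidableEq A] (x : ℕ → A) (m : ℕ) : ℝ≥0∞ :=
  ⨆ e ∈ {e : ℕ | IsAbPow x e m}, (e : ℝ≥0∞)

/-- The abelian critical exponent of an infinite word. -/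
noncomputable def AbCritExp {A : Type*} [DecidableEq A] (x : ℕ → A) : ℝ≥0∞ :=
  Filter.atTop.limsup fun m : ℕ => AbExpSup x m / (m : ℝ≥0∞)

/-- The `N`-uniform substitution `σ(0) = # 0^{N-1}`, `σ(1) = # 1^{N-1}`,
with `# = 2` in `Fin 3`. -/
def sigmaLetter (N : ℕ) (a : Fin 2) : List (Fin 3) :=
  (2 : Fin 3) :: List.replicate (N - 1) a.castSucc

/-- `σ(w)`, applying `σ` letterwise to the infinite binary word `w`. -/
def sigmaWord (N : ℕ) (w : ℕ → Fin 2) (n : ℕ) : Fin 3 :=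
  (sigmaLetter N (w (n / N))).getD (n % N) 0

/-!
Abelian powers of `σ(s)` whose period `kN` is a multiple of `N` correspond exactly to abelian
powers of `s` of period `k` with the same exponent. Aligned ones are the images under `σ` of
abelian powers of `s`. For one starting at offset `b` inside a block, each of its blocks contains
`(N - 1)` times as many letters `a` as the corresponding block of `s`, up to corrections of size
`b - 1` at both ends; since `N - 1` is odd and `b - 1 < N - 1`, these corrections cannot absorb a
change in the counts of `s`. If `N ∤ m`, an abelian power of period `m` has exponent less than
`N`: otherwise its first `N` blocks would form a factor of length `N m`, which contains exactly
`m` letters `#`, and also `N` times the common number of `#` per block. Hence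
`A_{σ(s)}(kN) = A_s(k)` while `A_{σ(s)}(m) < N` for the other periods, and the limsup of
`A_{σ(s)}(m) / m` is that of `A_s(k) / k` divided by `N`.
-/

section Factor

variable {A : Type*}

def factor (x : ℕ → A) (p n : ℕ) : List A :=
  (List.range n).map fun j => x (p + j)

@[simp]
theorem length_factor (x : ℕ → A) (p n : ℕ) : (factor x p n).length = n := by
  simp [factor]

theorem factor_add (x : ℕ → A) (p m n : ℕ) :
    factor x p (m + n) = factor x p m ++ factor x (p + m) n := by
  simp [factor, List.range_add, Function.comp_def, add_assoc]

theorem factor_one (x : ℕ → A) (p : ℕ) : factor x p 1 = [x p] := rfl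

theorem occursIn_factor (x : ℕ → A) (p n : ℕ) : OccursIn x (factor x p n) :=
  ⟨p, by rw [length_factor]; rfl⟩

theorem factor_mul (x : ℕ → A) (p m e : ℕ) :
    factor x p (e * m) = ((List.range e).map fun i => factor x (p + i * m) m).flatten := by
  induction e with
  | zero => simp [factor]
  | succ e ih =>
    rw [List.range_succ, List.map_append, List.flatten_append, ← ih, Nat.succ_mul, factor_add]
    simp

theorem exists_eq_factor_of_occursIn_flatten {x : ℕ → A} {u : ℕ → List A} {e m : ℕ}
    (hlen : ∀ i < e, (u i).length = m) (h : OccursIn x ((List.range e).map u).flatten) :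
    ∃ p, ∀ i < e, u i = factor x (p + i * m) m := by
  obtain ⟨p, hp⟩ := h
  have hlengths : ((List.range e).map u).map List.length =
      ((List.range e).map fun i => factor x (p + i * m) m).map List.length := by
    simp only [List.map_map, List.map_inj_left, List.mem_range, Function.comp_apply,
      length_factor]
    exact hlen
  have hflat : ((List.range e).map u).flatten =
      ((List.range e).map fun i => factor x (p + i * m) m).flatten := by
    rw [hp, List.length_flatten, hlengths, ← List.length_flatten, ← factor_mul, length_factor]
    rfl
  have hmap := List.eq_iff_flatten_eq.2 ⟨hflat, hlengths⟩
  simp only [List.map_inj_left, List.mem_range] at hmap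
  exact ⟨p, hmap⟩

theorem count_factor_eq_of_periodic [DecidableEq A] {x : ℕ → A} {a : A} {n : ℕ}
    (hx : ∀ t, x (t + n) = a ↔ x t = a) (t : ℕ) :
    (factor x t n).count a = (factor x 0 n).count a := by
  induction t with
  | zero => rfl
  | succ t ih =>
    have h := congrArg (List.count a) ((factor_add x t 1 n).symm.trans
      (add_comm 1 n ▸ factor_add x t n 1))
    have hend : [x t].count a = [x (t + n)].count a := by
      simp [List.count_singleton, hx]
    simp only [List.count_append, factor_one, hend] at h
    omega

end Factor

section AbelianPower

variable {A : Type*} [DecidableEq A]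

theorem abEq_iff_perm {u v : List A} : AbEq u v ↔ u.Perm v :=
  List.perm_iff_count.symm

theorem isAbPow_iff {x : ℕ → A} {e m : ℕ} :
    IsAbPow x e m ↔ 0 < e ∧ 0 < m ∧
      ∃ p, ∀ i < e, AbEq (factor x (p + i * m) m) (factor x p m) := by
  constructor
  · rintro ⟨he, hm, u, hlen, hab, hocc⟩
    obtain ⟨p, hp⟩ := exists_eq_factor_of_occursIn_flatten hlen hocc
    refine ⟨he, hm, p, fun i hi => ?_⟩
    have h := hab i hi
    rwa [hp i hi, hp 0 he, zero_mul, add_zero] at h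
  · rintro ⟨he, hm, p, hp⟩
    refine ⟨he, hm, fun i => factor x (p + i * m) m, fun _ _ => length_factor .., ?_, ?_⟩
    · simpa using hp
    · rw [← factor_mul]
      exact occursIn_factor ..

theorem count_factor_mul_of_abEq {x : ℕ → A} {p m e : ℕ}
    (h : ∀ i < e, AbEq (factor x (p + i * m) m) (factor x p m)) (a : A) :
    (factor x p (e * m)).count a = e * (factor x p m).count a := by
  induction e with
  | zero => simp [factor]
  | succ e ih =>
    rw [Nat.succ_mul, factor_add, List.count_append, ih fun i hi => h i (by omega),
      h e (by omega), Nat.succ_mul]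

end AbelianPower

theorem eq_of_mul_add_eq_mul_add_of_odd {n B C C' u v : ℕ} (hn : Odd n) (hB : B < n)
    (hu : u ≤ 2) (hv : v ≤ 2) (h : n * C + B * u = n * C' + B * v) : C = C' := by
  wlog hle : C ≤ C' generalizing C C' u v
  · exact (this hv hu h.symm (le_of_not_ge hle)).symm
  obtain ⟨d, rfl⟩ := Nat.exists_eq_add_of_le hle
  obtain _ | d := d
  · rfl
  exfalso
  have hd : d = 0 := by nlinarith
  subst hd
  rw [Nat.mul_add, Nat.mul_one, Nat.add_assoc] at h
  obtain ⟨j, rfl⟩ := hn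
  interval_cases u <;> interval_cases v <;> omega

theorem ENNReal.limsup_div_const {α : Type*} {l : Filter α} (u : α → ℝ≥0∞) {c : ℝ≥0∞}
    (hc : c ≠ 0) : limsup (fun x => u x / c) l = limsup u l / c := by
  simp only [div_eq_mul_inv]
  rw [ENNReal.limsup_mul_const_of_ne_top (ENNReal.inv_ne_top.2 hc), mul_comm]

theorem ENNReal.limsup_div_eq_of_mul_eq {N : ℕ} (hN : 0 < N) {f g : ℕ → ℝ≥0∞} {C : ℝ≥0∞}
    (hC : C ≠ ⊤) (hfg : ∀ k, f (k * N) = g k) (hf : ∀ m, ¬ N ∣ m → f m ≤ C) :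
    limsup (fun m : ℕ => f m / m) atTop = limsup (fun k : ℕ => g k / k) atTop / N := by
  have hN0 : (N : ℝ≥0∞) ≠ 0 := by exact_mod_cast hN.ne'
  have hblock : ∀ k, f (k * N) / ↑(k * N) = g k / k / N := fun k => by
    rw [hfg, Nat.cast_mul, div_eq_mul_inv, div_eq_mul_inv, div_eq_mul_inv,
      ENNReal.mul_inv (Or.inr (ENNReal.natCast_ne_top N)) (Or.inr hN0), mul_assoc]
  apply le_antisymm
  · have hle : ∀ m : ℕ, f m / m ≤ max (g (m / N) / ↑(m / N) / N) (C / m) := fun m => by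
      by_cases hm : N ∣ m
      · obtain ⟨k, rfl⟩ := hm
        rw [Nat.mul_div_cancel_left k hN, mul_comm, hblock]
        exact le_max_left _ _
      · exact le_max_of_le_right (ENNReal.div_le_div_right (hf m hm) _)
    have hsmall : limsup (fun m : ℕ => C / m) atTop = 0 := by
      apply Tendsto.limsup_eq
      simpa only [div_eq_mul_inv, mul_zero] using
        ENNReal.Tendsto.const_mul ENNReal.tendsto_inv_nat_nhds_zero (Or.inr hC)
    calc limsup (fun m : ℕ => f m / m) atTop
        ≤ limsup (fun m : ℕ => max (g (m / N) / ↑(m / N) / N) (C / m)) atTop :=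
          limsup_le_limsup (Eventually.of_forall hle)
      _ = limsup (fun k : ℕ => g k / k) atTop / N := by
          rw [limsup_max, hsmall, max_eq_left zero_le,
            ENNReal.limsup_div_const (fun m => g (m / N) / ↑(m / N)) hN0,
            ← Function.comp_def (fun k : ℕ => g k / k), limsup_comp, map_div_atTop_eq_nat N hN]
  · calc limsup (fun k : ℕ => g k / k) atTop / N
        = limsup ((fun m : ℕ => f m / m) ∘ (· * N)) atTop := by
          rw [← ENNReal.limsup_div_const _ hN0]
          congr 1
          funext k
          exact (hblock k).symm
      _ ≤ limsup (fun m : ℕ => f m / m) atTop :=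
          (tendsto_id.atTop_mul_const' hN).limsup_comp_le_limsup

section Sigma

variable {N : ℕ} {s : ℕ → Fin 2}

theorem length_sigmaLetter (hN : 0 < N) (a : Fin 2) : (sigmaLetter N a).length = N := by
  simp [sigmaLetter]
  omega

theorem castSucc_ne_two (a : Fin 2) : a.castSucc ≠ 2 := by
  fin_cases a <;> decide

theorem sigmaLetter_getD_eq_two_iff (N : ℕ) (a : Fin 2) (j : ℕ) :
    (sigmaLetter N a).getD j 0 = 2 ↔ j = 0 := by
  cases j with
  | zero => simp [sigmaLetter]
  | succ j =>
    rw [sigmaLetter, List.getD_cons_succ]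
    simp only [List.getD_eq_getElem?_getD, List.getElem?_replicate, Nat.add_one_ne_zero,
      iff_false]
    split <;> simp [castSucc_ne_two]

theorem sigmaWord_eq_two_iff (n : ℕ) : sigmaWord N s n = 2 ↔ n % N = 0 :=
  sigmaLetter_getD_eq_two_iff ..

theorem factor_sigmaWord_mul_eq_take (hN : 0 < N) (c : ℕ) {r : ℕ} (hr : r ≤ N) :
    factor (sigmaWord N s) (c * N) r = (sigmaLetter N (s c)).take r := by
  apply List.ext_getElem
  · simp [length_sigmaLetter hN, hr]
  intro j hj _
  have hjN : j < N := by simp at hj; omega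
  have hdiv : (c * N + j) / N = c := by
    rw [Nat.mul_comm, Nat.mul_add_div hN, Nat.div_eq_of_lt hjN, add_zero]
  have hmod : (c * N + j) % N = j := by simp [Nat.mod_eq_of_lt hjN]
  simp only [factor, List.getElem_map, List.getElem_range, List.getElem_take, sigmaWord, hdiv,
    hmod]
  exact List.getD_eq_getElem _ _ _

theorem factor_sigmaWord_mul (hN : 0 < N) (c k : ℕ) :
    factor (sigmaWord N s) (c * N) (k * N) = (factor s c k).flatMap (sigmaLetter N) := by
  induction k with
  | zero => simp [factor]
  | succ k ih =>
    rw [Nat.succ_mul, factor_add, ih, ← Nat.add_mul, factor_sigmaWord_mul_eq_take hN _ le_rfl,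
      List.take_of_length_le (length_sigmaLetter hN _).le, factor_add, factor_one,
      List.flatMap_append, List.flatMap_singleton]

theorem count_two_factor_sigmaWord (hN : 0 < N) (t k : ℕ) :
    (factor (sigmaWord N s) t (k * N)).count 2 = k := by
  have hblock : ∀ t, (factor (sigmaWord N s) t N).count 2 = 1 := by
    intro t
    rw [count_factor_eq_of_periodic (fun t => by simp [sigmaWord_eq_two_iff]),
      ← zero_mul N, factor_sigmaWord_mul_eq_take hN 0 le_rfl,
      List.take_of_length_le (length_sigmaLetter hN _).le]
    simp [sigmaLetter, List.count_replicate, castSucc_ne_two]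
  induction k generalizing t with
  | zero => simp [factor]
  | succ k ih => rw [Nat.succ_mul, factor_add, List.count_append, ih, hblock]

theorem count_castSucc_flatMap_sigmaLetter (l : List (Fin 2)) (a : Fin 2) :
    (l.flatMap (sigmaLetter N)).count a.castSucc = (N - 1) * l.count a := by
  induction l with
  | nil => simp
  | cons b l ih =>
    rw [List.flatMap_cons, List.count_append, ih, List.count_cons]
    simp only [sigmaLetter, List.count_cons, List.count_replicate, beq_iff_eq,
      (castSucc_ne_two _).symm, Fin.castSucc_inj]
    split <;> simp [mul_add, add_comm]

-- For `r = 0` the truncated `r - 1` is `0`, as it should be.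
theorem count_castSucc_take_sigmaLetter {r : ℕ} (hr : r ≤ N) (a b : Fin 2) :
    ((sigmaLetter N b).take r).count a.castSucc = (r - 1) * if b = a then 1 else 0 := by
  cases r with
  | zero => simp
  | succ r =>
    simp only [sigmaLetter, List.take_succ_cons, List.take_replicate, List.count_cons,
      List.count_replicate, beq_iff_eq, (castSucc_ne_two _).symm, Fin.castSucc_inj]
    split
    · simp
      omega
    · simp

theorem isAbPow_sigmaWord_mul (hN : 0 < N) {e k : ℕ} (h : IsAbPow s e k) :
    IsAbPow (sigmaWord N s) e (k * N) := by
  obtain ⟨he, hk, c, hc⟩ := isAbPow_iff.1 h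
  refine isAbPow_iff.2 ⟨he, Nat.mul_pos hk hN, c * N, fun i hi => ?_⟩
  rw [show c * N + i * (k * N) = (c + i * k) * N by ring, factor_sigmaWord_mul hN,
    factor_sigmaWord_mul hN]
  exact abEq_iff_perm.2 ((abEq_iff_perm.1 (hc i hi)).flatMap_right _)

theorem count_castSucc_factor_zero_sigmaWord (hN : 0 < N) (q : ℕ) {r : ℕ}
    (hr : r ≤ N) (a : Fin 2) :
    (factor (sigmaWord N s) 0 (q * N + r)).count a.castSucc =
      (N - 1) * (factor s 0 q).count a + (r - 1) * if s q = a then 1 else 0 := by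
  have hq := factor_sigmaWord_mul (s := s) hN 0 q
  rw [zero_mul] at hq
  rw [factor_add, List.count_append, hq, zero_add, factor_sigmaWord_mul_eq_take hN q hr,
    count_castSucc_flatMap_sigmaLetter, count_castSucc_take_sigmaLetter hr]

theorem count_castSucc_factor_sigmaWord (hN : 0 < N) (c k : ℕ) {b : ℕ}
    (hb : b ≤ N) (a : Fin 2) :
    (factor (sigmaWord N s) (c * N + b) (k * N)).count a.castSucc +
        (b - 1) * (if s c = a then 1 else 0) =
      (N - 1) * (factor s c k).count a + (b - 1) * if s (c + k) = a then 1 else 0 := by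
  have h := congrArg (List.count a.castSucc) (factor_add (sigmaWord N s) 0 (c * N + b) (k * N))
  rw [zero_add, show c * N + b + k * N = (c + k) * N + b by ring, List.count_append,
    count_castSucc_factor_zero_sigmaWord hN _ hb, count_castSucc_factor_zero_sigmaWord hN _ hb,
    factor_add s 0 c k, zero_add, List.count_append, mul_add] at h
  omega

theorem isAbPow_of_isAbPow_sigmaWord_mul (hN : 0 < N) (hNe : Even N) {e k : ℕ}
    (h : IsAbPow (sigmaWord N s) e (k * N)) : IsAbPow s e k := by
  obtain ⟨he, hkN, p, hp⟩ := isAbPow_iff.1 h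
  obtain ⟨c, b, hb, rfl⟩ : ∃ c b, b < N ∧ p = c * N + b :=
    ⟨p / N, p % N, Nat.mod_lt p hN, (Nat.div_add_mod' p N).symm⟩
  refine isAbPow_iff.2 ⟨he, Nat.pos_of_mul_pos_right hkN, c, fun i hi a => ?_⟩
  have hwindow : ∀ j < e,
      (factor (sigmaWord N s) (c * N + b) (k * N)).count a.castSucc +
          (b - 1) * (if s (c + j * k) = a then 1 else 0) =
        (N - 1) * (factor s (c + j * k) k).count a +
          (b - 1) * if s (c + j * k + k) = a then 1 else 0 := by
    intro j hj
    rw [← hp j hj a.castSucc, show c * N + b + j * (k * N) = (c + j * k) * N + b by ring]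
    exact count_castSucc_factor_sigmaWord hN _ _ hb.le a
  have h0 := hwindow 0 he
  have hi := hwindow i hi
  simp only [zero_mul, add_zero] at h0
  have hN2 : 2 ≤ N := by obtain ⟨j, rfl⟩ := hNe; omega
  refine eq_of_mul_add_eq_mul_add_of_odd (Nat.Even.sub_odd (n := 1) hN hNe odd_one)
    (by omega : b - 1 < N - 1)
    (u := (if s (c + i * k + k) = a then 1 else 0) + if s c = a then 1 else 0)
    (v := (if s (c + i * k) = a then 1 else 0) + if s (c + k) = a then 1 else 0)
    (by split_ifs <;> omega) (by split_ifs <;> omega) ?_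
  rw [mul_add, mul_add]
  omega

theorem lt_of_isAbPow_sigmaWord (hN : 0 < N) {e m : ℕ} (hm : ¬ N ∣ m)
    (h : IsAbPow (sigmaWord N s) e m) : e < N := by
  obtain ⟨-, -, p, hp⟩ := isAbPow_iff.1 h
  by_contra! hNe
  have hcount := count_factor_mul_of_abEq (e := N) (fun i hi => hp i (by omega)) 2
  rw [mul_comm, count_two_factor_sigmaWord hN] at hcount
  exact hm ⟨_, hcount⟩

theorem abExpSup_sigmaWord_mul (hN : 0 < N) (hNe : Even N) (k : ℕ) :
    AbExpSup (sigmaWord N s) (k * N) = AbExpSup s k := by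
  have hpow : {e | IsAbPow (sigmaWord N s) e (k * N)} = {e | IsAbPow s e k} :=
    Set.ext fun _ => ⟨isAbPow_of_isAbPow_sigmaWord_mul hN hNe, isAbPow_sigmaWord_mul hN⟩
  rw [AbExpSup, AbExpSup, hpow]

theorem abExpSup_sigmaWord_le (hN : 0 < N) {m : ℕ} (hm : ¬ N ∣ m) :
    AbExpSup (sigmaWord N s) m ≤ N :=
  iSup₂_le fun _ he => by exact_mod_cast (lt_of_isAbPow_sigmaWord hN hm he).le

theorem abCritExp_sigmaWord_eq_div (hN : 0 < N) (hNe : Even N) :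
    AbCritExp (sigmaWord N s) = AbCritExp s / N :=
  ENNReal.limsup_div_eq_of_mul_eq hN (ENNReal.natCast_ne_top N)
    (abExpSup_sigmaWord_mul hN hNe) fun _ hm => abExpSup_sigmaWord_le hN hm

end Sigma

theorem abCritExp_sigmaWord_general (N : ℕ) (hN : 0 < N) (hNe : Even N)
    (s : ℕ → Fin 2) (θ' : ℝ)
    (hs : AbCritExp s = ENNReal.ofReal θ') :
    AbCritExp (sigmaWord N s) = ENNReal.ofReal (θ' / N) := by
  rw [abCritExp_sigmaWord_eq_div hN hNe, hs, ENNReal.ofReal_div_of_pos (by exact_mod_cast hN),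
    ENNReal.ofReal_natCast]

/-- For even `N > 0`: if `s` is an infinite binary word with abelian critical
exponent `θ' > 0`, then `σ(s)` has abelian critical exponent `θ' / N`. -/
theorem abCritExp_sigmaWord (N : ℕ) (hN : 0 < N) (hNe : Even N)
    (s : ℕ → Fin 2) (θ' : ℝ) (hθ : 0 < θ')
    (hs : AbCritExp s = ENNReal.ofReal θ') :
    AbCritExp (sigmaWord N s) = ENNReal.ofReal (θ' / N) :=
  abCritExp_sigmaWord_general N hN hNe s θ' hs
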